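/- Let μ be a partition of n, use the total order <₁ on the super alphabet A, and let ρ be a partition of n with ρ ≰ μ' in dominance order. Then Σ_σ (−1)^{m(σ)} q^{p(σ)+inv(σ)} t^{maj(σ)} = 0, where the sum is over all super fillings σ : dg(μ) → A such that #{u ∈ dg(μ) : |σ(u)| = k} = ρ_k for every k. -/

import Mathlib

open Finset MvPolynomial

namespace HHL

/-! ### Diagrams, fillings and the statistics `inv` and `maj` -/

/-- The cells of the Young diagram of the partition `μ` (given as the list of
its row lengths `μ_1, μ_2, …`); the cell `(i,j)` lies in row `i` (from the
bottom, French style) and column `j`, with `1 ≤ i ≤ ℓ(μ)`, `1 ≤ j ≤ μ_i`. -/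
def cells (μ : List ℕ) : Finset (ℕ × ℕ) :=
  (Finset.Icc 1 μ.length ×ˢ Finset.Icc 1 (μ.foldr max 0)).filter
    (fun u => u.2 ≤ μ.getD (u.1 - 1) 0)

/-- `μ` is a partition: a weakly decreasing list of positive integers. -/
def IsPartitionList (μ : List ℕ) : Prop := μ.Pairwise (· ≥ ·) ∧ ∀ x ∈ μ, 0 < x

/-- The arm of a cell: the number of cells strictly to its right in its row. -/
def arm (μ : List ℕ) (u : ℕ × ℕ) : ℕ :=
  ((cells μ).filter (fun v => v.1 = u.1 ∧ u.2 < v.2)).card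

/-- The leg of a cell: the number of cells strictly above it in its column. -/
def leg (μ : List ℕ) (u : ℕ × ℕ) : ℕ :=
  ((cells μ).filter (fun v => v.2 = u.2 ∧ u.1 < v.1)).card

/-- `u` precedes `v` in the reading order (row by row from the top row down,
left to right within each row). -/
def ReadBefore (u v : ℕ × ℕ) : Prop := v.1 < u.1 ∨ (u.1 = v.1 ∧ u.2 < v.2)

instance (u v : ℕ × ℕ) : Decidable (ReadBefore u v) := by
  unfold ReadBefore; infer_instance

/-- `u` and `v` attack each other and `u` precedes `v` in reading order: either
they are in the same row with `u` to the left, or `u` is one row above `v` and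
strictly to its right. -/
def AttackOrd (u v : ℕ × ℕ) : Prop :=
  (u.1 = v.1 ∧ u.2 < v.2) ∨ (u.1 = v.1 + 1 ∧ v.2 < u.2)

instance (u v : ℕ × ℕ) : Decidable (AttackOrd u v) := by
  unfold AttackOrd; infer_instance

/-- `u` and `v` attack each other. -/
def Attack (u v : ℕ × ℕ) : Prop := AttackOrd u v ∨ AttackOrd v u

instance (u v : ℕ × ℕ) : Decidable (Attack u v) := by
  unfold Attack; infer_instance

section Stats

variable {V : Type} (μ : List ℕ) (Ind : V → V → Prop) [DecidableRel Ind] (σ : ℕ × ℕ → V)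

/-- The set `Inv(σ)` of inversions of a filling `σ`, recorded as ordered pairs
`(u,v)` with `u` attacking `v`, `u` preceding `v` in reading order, and
`I(σ(u),σ(v)) = 1`; here `Ind x y` means `I(x,y) = 1` (for ordinary fillings
`Ind x y ↔ x > y`). -/
def invPairs : Finset ((ℕ × ℕ) × (ℕ × ℕ)) :=
  ((cells μ) ×ˢ (cells μ)).filter fun p => AttackOrd p.1 p.2 ∧ Ind (σ p.1) (σ p.2)

/-- The descent set `Des(σ)`: cells `u = (i+1,j)` with `v = (i,j) ∈ dg(μ)` and
`I(σ(u),σ(v)) = 1`. -/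
def desCells : Finset (ℕ × ℕ) :=
  (cells μ).filter fun u => (u.1 - 1, u.2) ∈ cells μ ∧ Ind (σ u) (σ (u.1 - 1, u.2))

/-- `maj(σ) = Σ_{u ∈ Des(σ)} (leg(u) + 1)`. -/
def majStat : ℕ := ∑ u ∈ desCells μ Ind σ, (leg μ u + 1)

/-- `inv(σ) = |Inv(σ)| − Σ_{u ∈ Des(σ)} arm(u)`. -/
def invStat : ℕ := (invPairs μ Ind σ).card - ∑ u ∈ desCells μ Ind σ, arm μ u

end Stats

/-- For ordinary (positive-integer valued) fillings, `I(x,y) = 1` iff `x > y`. -/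
def natInd : ℕ → ℕ → Prop := fun x y => y < x

instance : DecidableRel natInd := fun _ _ => by unfold natInd; infer_instance

/-- Extend a function defined on the cells of `μ` to a total function. -/
def extendF {V : Type} (μ : List ℕ) (d : V) (f : {u // u ∈ cells μ} → V) : ℕ × ℕ → V :=
  fun u => if h : u ∈ cells μ then f ⟨u, h⟩ else d

/-- A filling of `dg(μ)` with entries in `{1, …, N}`, encoded by a function to
`Fin N` (value `k` means the entry `k + 1`), as a total function `ℕ × ℕ → ℕ`. -/
def natFill (μ : List ℕ) {N : ℕ} (f : {u // u ∈ cells μ} → Fin N) : ℕ × ℕ → ℕ :=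
  extendF μ 0 fun u => (f u).val + 1

/-- Haglund's combinatorial formula
`C_μ(x_1,…,x_N;q,t) = Σ_σ q^{inv(σ)} t^{maj(σ)} x^σ`, a polynomial in
`x_1,…,x_N` with coefficients in `ℤ[q,t]`, where `q = C (X 0)`, `t = C (X 1)`. -/
noncomputable def Cmu (μ : List ℕ) (N : ℕ) :
    MvPolynomial (Fin N) (MvPolynomial (Fin 2) ℤ) :=
  ∑ f : {u // u ∈ cells μ} → Fin N,
    C ((X 0 : MvPolynomial (Fin 2) ℤ) ^ invStat μ natInd (natFill μ f) *
       (X 1 : MvPolynomial (Fin 2) ℤ) ^ majStat μ natInd (natFill μ f)) *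
    ∏ u, X (f u)

/-! ### Skew diagrams and LLT polynomials -/

/-- A pair of partitions `(λ, μ)` with `μ ⊆ λ`, representing the skew diagram
`λ∖μ`. -/
def IsSkewPair (p : List ℕ × List ℕ) : Prop :=
  IsPartitionList p.1 ∧ IsPartitionList p.2 ∧ ∀ i, p.2.getD i 0 ≤ p.1.getD i 0

/-- The cells of the skew diagram `λ∖μ`. -/
def skewCells (p : List ℕ × List ℕ) : Finset (ℕ × ℕ) := cells p.1 \ cells p.2

/-- The content `c(u) = i − j` of the cell `u = (i,j)`. -/
def content (u : ℕ × ℕ) : ℤ := (u.1 : ℤ) - (u.2 : ℤ)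

/-- The disjoint union of the cells of a tuple of skew diagrams. -/
abbrev TDom {k : ℕ} (ν : Fin k → List ℕ × List ℕ) : Type :=
  Σ i : Fin k, {u // u ∈ skewCells (ν i)}

/-- `f` (with `f ⟨i,u⟩` the entry of the `i`-th tableau at the cell `u`) is a
tuple of semistandard Young tableaux: entries weakly increasing along each row
and strictly increasing up each column. -/
def IsSSYTtuple {k : ℕ} (ν : Fin k → List ℕ × List ℕ) (f : TDom ν → ℕ) : Prop :=
  ∀ i : Fin k, ∀ u v : {u // u ∈ skewCells (ν i)},
    (u.1.1 = v.1.1 ∧ u.1.2 ≤ v.1.2 → f ⟨i, u⟩ ≤ f ⟨i, v⟩) ∧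
    (u.1.2 = v.1.2 ∧ u.1.1 < v.1.1 → f ⟨i, u⟩ < f ⟨i, v⟩)

instance {k : ℕ} (ν : Fin k → List ℕ × List ℕ) (f : TDom ν → ℕ) :
    Decidable (IsSSYTtuple ν f) := by unfold IsSSYTtuple; infer_instance

/-- The number of inversions of a tuple of tableaux: pairs of entries
`T^(i)(u) > T^(j)(v)` with either `i < j` and `c(u) = c(v)`, or `i > j` and
`c(u) = c(v) + 1`. -/
def lltInv {k : ℕ} (ν : Fin k → List ℕ × List ℕ) (f : TDom ν → ℕ) : ℕ :=
  (Finset.univ.filter fun p : TDom ν × TDom ν =>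
    ((p.1.1 < p.2.1 ∧ content p.1.2.1 = content p.2.2.1) ∨
     (p.2.1 < p.1.1 ∧ content p.1.2.1 = content p.2.2.1 + 1)) ∧
    f p.2 < f p.1).card

/-- The LLT polynomial `G_ν(x_1,…,x_N;q) = Σ_T q^{inv(T)} x^T` in `N`
variables, with coefficients in `ℤ[q]` (`q = C Polynomial.X`); tableau entries
in `{1,…,N}` are encoded by `Fin N` (value `k` means entry `k + 1`). -/
noncomputable def llt {k : ℕ} (ν : Fin k → List ℕ × List ℕ) (N : ℕ) :
    MvPolynomial (Fin N) (Polynomial ℤ) :=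
  ∑ f ∈ Finset.univ.filter (fun f : TDom ν → Fin N =>
      IsSSYTtuple ν (fun a => (f a).val + 1)),
    C (Polynomial.X ^ lltInv ν (fun a => (f a).val + 1)) * ∏ a, X (f a)

/-! ### The super alphabet -/

/-- The super alphabet `A = {1, 1̄, 2, 2̄, …}`: the letter `(a, b)` has absolute
value `a + 1` and is negative (barred) iff `b = true`. -/
abbrev SLetter : Type := ℕ × Bool

/-- The absolute value of a super letter. -/
def sAbs (x : SLetter) : ℕ := x.1 + 1

/-- The ordering `<₁`: `1 < 1̄ < 2 < 2̄ < ⋯`. -/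
def lt1 (x y : SLetter) : Prop :=
  x.1 < y.1 ∨ (x.1 = y.1 ∧ x.2 = false ∧ y.2 = true)

instance : DecidableRel lt1 := fun _ _ => by unfold lt1; infer_instance

/-- The ordering `<₂`: `1 < 2 < 3 < ⋯ < 3̄ < 2̄ < 1̄`. -/
def lt2 (x y : SLetter) : Prop :=
  (x.2 = false ∧ y.2 = false ∧ x.1 < y.1) ∨ (x.2 = false ∧ y.2 = true) ∨
    (x.2 = true ∧ y.2 = true ∧ y.1 < x.1)

instance : DecidableRel lt2 := fun _ _ => by unfold lt2; infer_instance

/-- Given a total order `lt` on the super alphabet, `IndOf lt x y` holds iff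
`I(x,y) = 1`, i.e. `x > y`, or `x = y` is a negative letter. -/
def IndOf (lt : SLetter → SLetter → Prop) (x y : SLetter) : Prop :=
  lt y x ∨ (x = y ∧ x.2 = true)

instance (lt : SLetter → SLetter → Prop) [DecidableRel lt] : DecidableRel (IndOf lt) :=
  fun _ _ => by unfold IndOf; infer_instance

/-- A super filling of `dg(μ)` with letters of absolute value at most `N`, as a
total function (the value `(a, b)` with `a : Fin N` means the letter of
absolute value `a + 1`, barred iff `b`). -/
def superFill (μ : List ℕ) {N : ℕ} (f : {u // u ∈ cells μ} → Fin N × Bool) :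
    ℕ × ℕ → SLetter :=
  extendF μ (0, false) fun u => ((f u).1.val, (f u).2)

/-- A super filling with entries in `{1, 1̄}` (`f u = true` means entry `1̄`). -/
def boolFill (μ : List ℕ) (f : {u // u ∈ cells μ} → Bool) : ℕ × ℕ → SLetter :=
  extendF μ (0, false) fun u => ((0 : ℕ), f u)

/-- `m(σ)`: the number of negative entries of a super filling. -/
def negCount (μ : List ℕ) (σ : ℕ × ℕ → SLetter) : ℕ :=
  ((cells μ).filter fun u => (σ u).2 = true).card

/-- `p(σ)`: the number of positive entries of a super filling. -/
def posCount (μ : List ℕ) (σ : ℕ × ℕ → SLetter) : ℕ :=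
  ((cells μ).filter fun u => (σ u).2 = false).card

/-- A super filling is non-attacking if entries in attacking cells have
distinct absolute values. -/
def NonAttacking (μ : List ℕ) (σ : ℕ × ℕ → SLetter) : Prop :=
  ∀ u ∈ cells μ, ∀ v ∈ cells μ, Attack u v → sAbs (σ u) ≠ sAbs (σ v)

instance (μ : List ℕ) (σ : ℕ × ℕ → SLetter) : Decidable (NonAttacking μ σ) := by
  unfold NonAttacking; infer_instance

/-! ### Conjugate partitions, ribbons, connectivity -/

/-- `conj μ j = μ'_j`, the number of rows of `μ` of length at least `j`. -/
def conj (μ : List ℕ) (j : ℕ) : ℕ :=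
  ((Finset.range μ.length).filter fun i => j ≤ μ.getD i 0).card

/-- The transpose `μ'` of a partition, as a list. -/
def conjList (μ : List ℕ) : List ℕ :=
  (List.range (μ.foldr max 0)).map fun j => conj μ (j + 1)

/-- Transpose of a skew shape: `λ∖μ ↦ λ'∖μ'`. -/
def transposePair (p : List ℕ × List ℕ) : List ℕ × List ℕ :=
  (conjList p.1, conjList p.2)

/-- Two cells are adjacent (share an edge). -/
def AdjCell (u v : ℕ × ℕ) : Prop :=
  (u.1 = v.1 ∧ (u.2 = v.2 + 1 ∨ v.2 = u.2 + 1)) ∨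
  (u.2 = v.2 ∧ (u.1 = v.1 + 1 ∨ v.1 = u.1 + 1))

/-- A set of cells is connected (any two cells are joined by a path of
edge-adjacent cells inside the set). -/
def ConnSet (s : Finset (ℕ × ℕ)) : Prop :=
  ∀ u ∈ s, ∀ v ∈ s, Relation.ReflTransGen (fun a b => a ∈ s ∧ b ∈ s ∧ AdjCell a b) u v

/-- A set of cells contains no 2×2 block. -/
def No2x2 (s : Finset (ℕ × ℕ)) : Prop :=
  ¬ ∃ i j, (i, j) ∈ s ∧ (i + 1, j) ∈ s ∧ (i, j + 1) ∈ s ∧ (i + 1, j + 1) ∈ s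

/-! ### Reading words and cocharge -/

/-- Boolean comparison realizing the reading order. -/
def readLe (u v : ℕ × ℕ) : Bool :=
  decide (v.1 < u.1) || (decide (u.1 = v.1) && decide (u.2 ≤ v.2))

/-- The reading word of a filling `σ` of `dg(μ)`: its entries listed in reading
order. -/
noncomputable def readingWord (μ : List ℕ) (σ : ℕ × ℕ → ℕ) : List ℕ :=
  ((cells μ).toList.mergeSort readLe).map σ

/-- Boolean comparison for the cocharge-word ordering of the cells: entries of
`σ` decreasing and, within constant segments of `σ`, cells in decreasing
reading order. -/
def cwordLe (σ : ℕ × ℕ → ℕ) (u v : ℕ × ℕ) : Bool :=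
  decide (σ v < σ u) ||
    (decide (σ u = σ v) &&
      (decide (u.1 < v.1) || (decide (u.1 = v.1) && decide (v.2 ≤ u.2))))

/-- The cocharge word of a filling: the row indices of the cells, listed so that
the entries are decreasing, with ties broken by decreasing reading order. -/
noncomputable def cword (μ : List ℕ) (σ : ℕ × ℕ → ℕ) : List ℕ :=
  ((cells μ).toList.mergeSort (cwordLe σ)).map Prod.fst

/-- Cocharge of a word that is a permutation of `{1,…,n}`:
`Σ_{i ∈ D(w⁻¹)} (n − i)`, where `i ∈ D(w⁻¹)` iff `i + 1` occurs before `i`. -/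
def cochargePerm (w : List ℕ) : ℕ :=
  ∑ i ∈ Finset.Icc 1 (w.length - 1),
    if w.idxOf (i + 1) < w.idxOf i then w.length - i else 0

/-- The (0-based) positions of the letter `a` in `w`. -/
def letterPositions (w : List ℕ) (a : ℕ) : Finset ℕ :=
  (Finset.range w.length).filter fun k => w.getD k 0 = a

/-- The position `k_i` for the letter `a`: the rightmost occurrence of `a`
strictly to the left of `bound` if there is one, otherwise the rightmost
occurrence of `a`. -/
def choosePos (w : List ℕ) (a : ℕ) (bound : Option ℕ) : Option ℕ :=
  match bound with
  | none => (letterPositions w a).max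
  | some b =>
      let s := (letterPositions w a).filter (· < b)
      if s.Nonempty then s.max else (letterPositions w a).max

/-- `posListAux w i = [k_i, k_{i-1}, …, k_1]` (as options). -/
def posListAux (w : List ℕ) : ℕ → List (Option ℕ)
  | 0 => []
  | i + 1 =>
      let rest := posListAux w i
      choosePos w (i + 1) (rest.headD none) :: rest

/-- The set `S = {k_1, …, k_l}` of positions extracted in the cocharge
recursion, where `l` is the largest letter of `w`. -/
def extractSet (w : List ℕ) : Finset ℕ :=
  ((posListAux w (w.foldr max 0)).filterMap id).toFinset

/-- The subword of `w` at the positions in `S` (in increasing position order). -/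
def subwordOn (w : List ℕ) (S : Finset ℕ) : List ℕ :=
  ((List.range w.length).filter fun k => decide (k ∈ S)).map fun k => w.getD k 0

/-- The subword of `w` at the positions *not* in `S`. -/
def subwordOff (w : List ℕ) (S : Finset ℕ) : List ℕ :=
  ((List.range w.length).filter fun k => decide (k ∉ S)).map fun k => w.getD k 0

/-- Fuelled cocharge recursion: `cocharge w = cocharge y + cocharge z`, where
`y` is the extracted subword (a permutation of `{1,…,l}`) and `z` is the
complementary subword. -/
def cochargeAux : ℕ → List ℕ → ℕ
  | 0, _ => 0
  | fuel + 1, w =>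
      let S := extractSet w
      let z := subwordOff w S
      if z.length < w.length then cochargePerm (subwordOn w S) + cochargeAux fuel z
      else cochargePerm (subwordOn w S)

/-- The cocharge of a word of partition content. -/
def cocharge (w : List ℕ) : ℕ := cochargeAux w.length w

/-! ### Yamanouchi words and crystal operators -/

/-- A word is Yamanouchi if every final segment contains at least as many
letters `i` as letters `i + 1`, for every `i ≥ 1`. -/
def IsYamanouchi (w : List ℕ) : Prop :=
  ∀ k i, ((w.drop k).count (i + 2)) ≤ ((w.drop k).count (i + 1))

noncomputable instance : DecidablePred IsYamanouchi := fun _ => Classical.propDecidable _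

/-- The letters `i` (close, `false`) and `i + 1` (open, `true`) of `w`, as a
list of (position, is-open) tokens in position order. -/
def tokens (i : ℕ) (w : List ℕ) : List (ℕ × Bool) :=
  (List.range w.length).filterMap fun k =>
    if w.getD k 0 = i + 1 then some (k, true)
    else if w.getD k 0 = i then some (k, false) else none

/-- Stack pass performing the repeated deletion of adjacent matched pairs (an
`i + 1` immediately followed by an `i` in the current subword). The first
argument is the (reversed) list of surviving tokens so far. -/
def reduceTokens : List (ℕ × Bool) → List (ℕ × Bool) → List (ℕ × Bool)
  | acc, [] => acc.reverse
  | a :: acc', t :: rest =>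
      if a.2 ∧ ¬ t.2 then reduceTokens acc' rest
      else reduceTokens (t :: a :: acc') rest
  | [], t :: rest => reduceTokens [t] rest

/-- The surviving letters of `{i, i + 1}` in `w` after matched-pair deletion. -/
def survivors (i : ℕ) (w : List ℕ) : List (ℕ × Bool) := reduceTokens [] (tokens i w)

/-- The crystal raising operator `E_i` on words: change the first surviving
(unmatched) letter `i + 1` to `i`; `none` encodes `E_i w = 0`. -/
def crystalE (i : ℕ) (w : List ℕ) : Option (List ℕ) :=
  match (survivors i w).find? (fun t => t.2) with
  | none => none
  | some t => some (w.set t.1 i)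

/-! ### Straight-shape tableaux and Schur polynomials -/

/-- Semistandard tableau condition for a filling of the cells of `lam`. -/
def IsSSYTcells (lam : List ℕ) (T : {u // u ∈ cells lam} → ℕ) : Prop :=
  ∀ u v : {u // u ∈ cells lam},
    (u.1.1 = v.1.1 ∧ u.1.2 ≤ v.1.2 → T u ≤ T v) ∧
    (u.1.2 = v.1.2 ∧ u.1.1 < v.1.1 → T u < T v)

instance (lam : List ℕ) (T : {u // u ∈ cells lam} → ℕ) :
    Decidable (IsSSYTcells lam T) := by unfold IsSSYTcells; infer_instance

/-- The Schur polynomial `s_λ(x_1,…,x_N) = Σ_{T ∈ SSYT(λ), entries ≤ N} x^T`,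
with coefficients in a commutative ring `R`. -/
noncomputable def schurPoly (R : Type) [CommRing R] (lam : List ℕ) (N : ℕ) :
    MvPolynomial (Fin N) R :=
  ∑ T ∈ Finset.univ.filter (fun T : {u // u ∈ cells lam} → Fin N =>
      IsSSYTcells lam (fun u => (T u).val + 1)),
    ∏ u, X (T u)

/-- The decreasing list of parts of `p : Nat.Partition n`. -/
def partnList {n : ℕ} (p : n.Partition) : List ℕ :=
  (Multiset.sort p.parts (· ≤ ·)).reverse

/-!
The sum cancels under a sign-reversing involution. If `ρ ≰ μ'`, no filling of content `ρ` has
distinct absolute values along every row: a row of length `μ_i` holds at most `min μ_i m`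
entries of absolute value `≤ m`, and `∑ i, min μ_i m = μ'_1 + ⋯ + μ'_m`. Hence some cell attacks
a later cell whose entry has the same absolute value; let `c` be the last such cell in reading
order and toggle the bar of `σ(c)`. Under `<₁`, `I(x, y)` depends only on `|x|` and `|y|`,
except that for `|x| = |y|` it is decided by the sign of `x`. By the maximality of `c`, exactly
one later cell attacked by `c` has the absolute value of `σ(c)`, and the cell below `c` does
not, so the toggle moves exactly one pair in or out of `Inv(σ)` and fixes `Des(σ)`: `inv` and
`p` change by `±1` in opposite directions, `maj` is fixed and `m` changes parity.
-/

lemma mem_cells {μ : List ℕ} {u : ℕ × ℕ} :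
    u ∈ cells μ ↔ 1 ≤ u.1 ∧ u.1 ≤ μ.length ∧ 1 ≤ u.2 ∧ u.2 ≤ μ.getD (u.1 - 1) 0 := by
  have hmax : u.1 - 1 < μ.length → μ.getD (u.1 - 1) 0 ≤ μ.foldr max 0 := fun h =>
    List.le_max_of_le' 0 (List.getElem_mem h) (by simp [h])
  simp only [cells, mem_filter, mem_product, mem_Icc]
  constructor
  · tauto
  · rintro ⟨h1, h2, h3, h4⟩
    exact ⟨⟨⟨h1, h2⟩, h3, h4.trans (hmax (by omega))⟩, h4⟩

lemma sum_range_conj (μ : List ℕ) (m : ℕ) :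
    ∑ j ∈ range m, conj μ (j + 1) = ∑ i ∈ range μ.length, min (μ.getD i 0) m := by
  simp only [conj, card_filter]
  rw [sum_comm]
  refine sum_congr rfl fun i _ => ?_
  rw [← card_filter, ← card_range (min (μ.getD i 0) m)]
  congr 1
  ext j
  simp only [mem_filter, mem_range]
  omega

lemma card_filter_le_eq_sum {α : Type*} (s : Finset α) (a : α → ℕ) (ha : ∀ u ∈ s, 1 ≤ a u)
    (m : ℕ) : #{u ∈ s | a u ≤ m} = ∑ k ∈ range m, #{u ∈ s | a u = k + 1} := by
  classical
  rw [card_eq_sum_card_fiberwise (f := fun u => a u - 1) (t := range m)]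
  · refine sum_congr rfl fun k hk => congrArg card ?_
    ext u
    simp only [mem_filter, mem_range] at hk ⊢
    constructor
    · rintro ⟨⟨hu, _⟩, h⟩
      exact ⟨hu, by have := ha u hu; omega⟩
    · rintro ⟨hu, h⟩
      exact ⟨⟨hu, by omega⟩, by omega⟩
  · intro u hu
    simp only [mem_coe, mem_filter, coe_range, Set.mem_Iio] at hu ⊢
    have := ha u hu.1
    omega

lemma card_filter_le_sum_conj (μ : List ℕ) (a : ℕ × ℕ → ℕ) (m : ℕ)
    (ha : ∀ u ∈ cells μ, 1 ≤ a u)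
    (hinj : ∀ u ∈ cells μ, ∀ v ∈ cells μ, u.1 = v.1 → a u = a v → u = v) :
    #{u ∈ cells μ | a u ≤ m} ≤ ∑ j ∈ range m, conj μ (j + 1) := by
  classical
  rw [sum_range_conj, card_eq_sum_card_fiberwise (f := fun u => u.1 - 1) (t := range μ.length)]
  · refine sum_le_sum fun i _ => le_min ?_ ?_
    · calc #{u ∈ {u ∈ cells μ | a u ≤ m} | u.1 - 1 = i}
          ≤ #((Icc 1 (μ.getD i 0)).image (Prod.mk (i + 1))) := by
            refine card_le_card fun u hu => ?_
            simp only [mem_filter] at hu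
            obtain ⟨⟨hu, -⟩, rfl⟩ := hu
            obtain ⟨h1, -, h3, h4⟩ := mem_cells.mp hu
            exact mem_image.mpr ⟨u.2, mem_Icc.mpr ⟨h3, h4⟩, Prod.ext (by omega) rfl⟩
        _ ≤ μ.getD i 0 := card_image_le.trans (by simp)
    · calc #{u ∈ {u ∈ cells μ | a u ≤ m} | u.1 - 1 = i} ≤ #(Icc 1 m) := by
            refine card_le_card_of_injOn a (fun u hu => ?_) fun u hu v hv huv => ?_
            · simp only [mem_coe, mem_filter] at hu
              exact mem_Icc.mpr ⟨ha u hu.1.1, hu.1.2⟩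
            · simp only [mem_coe, mem_filter] at hu hv
              have := mem_cells.mp hu.1.1
              have := mem_cells.mp hv.1.1
              exact hinj u hu.1.1 v hv.1.1 (by omega) huv
        _ = m := by simp
  · intro u hu
    simp only [mem_coe, mem_filter, mem_cells, coe_range, Set.mem_Iio] at hu ⊢
    omega

lemma exists_row_repeat_of_not_dominated (μ ρ : List ℕ) (a : ℕ × ℕ → ℕ)
    (ha : ∀ u ∈ cells μ, 1 ≤ a u)
    (hcont : ∀ k, 1 ≤ k → #{u ∈ cells μ | a u = k} = ρ.getD (k - 1) 0)
    (hnd : ∃ m, ∑ j ∈ range m, conj μ (j + 1) < ∑ i ∈ range m, ρ.getD i 0) :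
    ∃ u ∈ cells μ, ∃ v ∈ cells μ, u.1 = v.1 ∧ u.2 < v.2 ∧ a u = a v := by
  obtain ⟨m, hm⟩ := hnd
  by_contra! hrep
  refine hm.not_ge ?_
  calc ∑ i ∈ range m, ρ.getD i 0 = #{u ∈ cells μ | a u ≤ m} := by
        rw [card_filter_le_eq_sum _ _ ha]
        exact sum_congr rfl fun k _ => (hcont (k + 1) le_add_self).symm
    _ ≤ ∑ j ∈ range m, conj μ (j + 1) := by
        refine card_filter_le_sum_conj μ a m ha fun u hu v hv hrow huv => ?_
        by_contra hne
        rcases lt_trichotomy u.2 v.2 with h | h | h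
        · exact hrep u hu v hv hrow h huv
        · exact hne (Prod.ext hrow h)
        · exact hrep v hv u hu hrow.symm h huv.symm

def readKey (u : ℕ × ℕ) : ℕᵒᵈ ×ₗ ℕ := toLex (OrderDual.toDual u.1, u.2)

lemma readKey_lt_of_attackOrd {u v : ℕ × ℕ} (h : AttackOrd u v) : readKey u < readKey v := by
  simp only [readKey, Prod.Lex.toLex_lt_toLex, OrderDual.toDual_lt_toDual,
    OrderDual.toDual_inj]
  unfold AttackOrd at h
  omega

lemma attack_of_attackOrd_of_attackOrd {c v w : ℕ × ℕ} (hv : AttackOrd c v)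
    (hw : AttackOrd c w) (hvw : v ≠ w) : AttackOrd v w ∨ AttackOrd w v := by
  unfold AttackOrd at *
  have : v.1 ≠ w.1 ∨ v.2 ≠ w.2 := by
    by_contra! h
    exact hvw (Prod.ext h.1 h.2)
  omega

lemma attackOrd_below_of_attackOrd {c w : ℕ × ℕ} (h : AttackOrd c w) (hc : 1 ≤ c.1) :
    AttackOrd w (c.1 - 1, c.2) := by
  unfold AttackOrd at *
  dsimp only
  omega

def attackRepeatCells (μ : List ℕ) (a : ℕ × ℕ → ℕ) : Finset (ℕ × ℕ) :=
  {u ∈ cells μ | ∃ v ∈ cells μ, AttackOrd u v ∧ a v = a u}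

noncomputable def lastAttackRepeat (μ : List ℕ) (a : ℕ × ℕ → ℕ) : ℕ × ℕ :=
  if h : (attackRepeatCells μ a).Nonempty then
    ((attackRepeatCells μ a).exists_max_image readKey h).choose
  else (0, 0)

section LastAttackRepeat

variable {μ : List ℕ} {a : ℕ × ℕ → ℕ} (hne : (attackRepeatCells μ a).Nonempty)
include hne

lemma lastAttackRepeat_spec : lastAttackRepeat μ a ∈ attackRepeatCells μ a ∧
    ∀ w ∈ attackRepeatCells μ a, readKey w ≤ readKey (lastAttackRepeat μ a) := by
  rw [lastAttackRepeat, dif_pos hne]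
  exact ((attackRepeatCells μ a).exists_max_image readKey hne).choose_spec

lemma lastAttackRepeat_mem : lastAttackRepeat μ a ∈ attackRepeatCells μ a :=
  (lastAttackRepeat_spec hne).1

lemma lastAttackRepeat_mem_cells : lastAttackRepeat μ a ∈ cells μ :=
  (mem_filter.mp (lastAttackRepeat_mem hne)).1

lemma notMem_attackRepeatCells_of_attackOrd {w : ℕ × ℕ}
    (hw : AttackOrd (lastAttackRepeat μ a) w) : w ∉ attackRepeatCells μ a := by
  intro hmem
  exact (readKey_lt_of_attackOrd hw).not_ge ((lastAttackRepeat_spec hne).2 w hmem)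

lemma existsUnique_attackRepeat_partner :
    ∃! w, w ∈ cells μ ∧ AttackOrd (lastAttackRepeat μ a) w ∧ a w = a (lastAttackRepeat μ a) := by
  obtain ⟨w₀, hw₀, hatt₀, ha₀⟩ := (mem_filter.mp (lastAttackRepeat_mem hne)).2
  refine ⟨w₀, ⟨hw₀, hatt₀, ha₀⟩, fun w ⟨hw, hatt, ha⟩ => ?_⟩
  by_contra hne'
  rcases attack_of_attackOrd_of_attackOrd hatt hatt₀ hne' with h | h
  · exact notMem_attackRepeatCells_of_attackOrd hne hatt
      (mem_filter.mpr ⟨hw, w₀, hw₀, h, ha₀.trans ha.symm⟩)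
  · exact notMem_attackRepeatCells_of_attackOrd hne hatt₀
      (mem_filter.mpr ⟨hw₀, w, hw, h, ha.trans ha₀.symm⟩)

lemma lastAttackRepeat_below_ne
    (hb : ((lastAttackRepeat μ a).1 - 1, (lastAttackRepeat μ a).2) ∈ cells μ) :
    a ((lastAttackRepeat μ a).1 - 1, (lastAttackRepeat μ a).2) ≠ a (lastAttackRepeat μ a) := by
  intro hab
  obtain ⟨w, hw, hatt, ha⟩ := (mem_filter.mp (lastAttackRepeat_mem hne)).2
  have hc : 1 ≤ (lastAttackRepeat μ a).1 := (mem_cells.mp (lastAttackRepeat_mem_cells hne)).1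
  exact notMem_attackRepeatCells_of_attackOrd hne hatt
    (mem_filter.mpr ⟨hw, _, hb, attackOrd_below_of_attackOrd hatt hc, hab.trans ha.symm⟩)

end LastAttackRepeat

lemma attackRepeatCells_nonempty (μ ρ : List ℕ) (a : ℕ × ℕ → ℕ)
    (hcont : ∀ k, 1 ≤ k → #{u ∈ cells μ | a u + 1 = k} = ρ.getD (k - 1) 0)
    (hnd : ∃ m, ∑ j ∈ range m, conj μ (j + 1) < ∑ i ∈ range m, ρ.getD i 0) :
    (attackRepeatCells μ a).Nonempty := by
  obtain ⟨u, hu, v, hv, hrow, hcol, huv⟩ :=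
    exists_row_repeat_of_not_dominated μ ρ (a · + 1) (fun _ _ => le_add_self) hcont hnd
  exact ⟨u, mem_filter.mpr ⟨hu, v, hv, Or.inl ⟨hrow, hcol⟩, (Nat.succ_injective huv).symm⟩⟩

lemma indOf_lt1_iff_of_fst_eq {x y : SLetter} (h : x.1 = y.1) : IndOf lt1 x y ↔ x.2 = true := by
  obtain ⟨a, b⟩ := x
  obtain ⟨a', b'⟩ := y
  dsimp only at h
  subst h
  cases b <;> cases b' <;> simp [IndOf, lt1]

lemma indOf_lt1_iff_of_fst_ne {x y : SLetter} (h : x.1 ≠ y.1) : IndOf lt1 x y ↔ y.1 < x.1 := by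
  simp only [IndOf, lt1, Prod.ext_iff]
  omega

lemma not_indOf_lt1_trans {x y z : SLetter} (hxy : ¬IndOf lt1 x y) (hyz : ¬IndOf lt1 y z) :
    ¬IndOf lt1 x z := by
  simp only [IndOf, lt1, Prod.ext_iff, not_or, not_and] at *
  cases hx : x.2 <;> cases hy : y.2 <;> cases hz : z.2 <;> simp_all <;> omega

/-- A descent `u` with a cell `v` to its right forces an inversion, either `(u, v)` or
`(v, b)` with `b` the cell below `u`; this injection keeps `inv` from being truncated. -/
lemma sum_arm_desCells_le_card_invPairs {V : Type} (μ : List ℕ) (Ind : V → V → Prop)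
    [DecidableRel Ind] (hInd : ∀ x y z, ¬Ind x y → ¬Ind y z → ¬Ind x z) (σ : ℕ × ℕ → V) :
    ∑ u ∈ desCells μ Ind σ, arm μ u ≤ #(invPairs μ Ind σ) := by
  simp only [arm]
  rw [← card_sigma]
  refine card_le_card_of_injOn
    (fun p => if Ind (σ p.1) (σ p.2) then (p.1, p.2) else (p.2, (p.1.1 - 1, p.1.2)))
    (fun ⟨u, v⟩ hp => ?_) (fun ⟨u, v⟩ hp ⟨u', v'⟩ hp' heq => ?_)
  · simp only [mem_coe, mem_sigma, mem_filter, desCells] at hp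
    obtain ⟨⟨hu, hb, hdes⟩, hv, hrow, hcol⟩ := hp
    have hu1 := (mem_cells.mp hu).1
    simp only [mem_coe, invPairs, mem_filter, mem_product]
    split_ifs with hI
    · exact ⟨⟨hu, hv⟩, Or.inl ⟨hrow.symm, hcol⟩, hI⟩
    · refine ⟨⟨hv, hb⟩, Or.inr ⟨by dsimp only; omega, hcol⟩, ?_⟩
      by_contra hI'
      exact hInd _ _ _ hI hI' hdes
  · simp only [mem_coe, mem_sigma, mem_filter, desCells] at hp hp'
    obtain ⟨⟨hu, -⟩, -, hrow, -⟩ := hp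
    obtain ⟨⟨hu', -⟩, -, hrow', -⟩ := hp'
    have hu1 := (mem_cells.mp hu).1
    have hu1' := (mem_cells.mp hu').1
    dsimp only at heq hrow hrow' hu1 hu1'
    split_ifs at heq <;> simp only [Prod.ext_iff] at heq
    · obtain ⟨⟨h1, h2⟩, h3, h4⟩ := heq
      obtain rfl : u = u' := Prod.ext h1 h2
      obtain rfl : v = v' := Prod.ext h3 h4
      rfl
    · omega
    · omega
    · obtain ⟨⟨h1, h2⟩, h3, h4⟩ := heq
      obtain rfl : u = u' := Prod.ext (by omega) h4
      obtain rfl : v = v' := Prod.ext h1 h2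
      rfl

def flipBar (x : SLetter) : SLetter := (x.1, !x.2)

def flipBarAt (c : ℕ × ℕ) (σ : ℕ × ℕ → SLetter) : ℕ × ℕ → SLetter :=
  Function.update σ c (flipBar (σ c))

section FlipBarAt

variable {μ : List ℕ} {σ : ℕ × ℕ → SLetter} {c : ℕ × ℕ}

@[simp]
lemma flipBarAt_fst (u : ℕ × ℕ) : (flipBarAt c σ u).1 = (σ u).1 := by
  by_cases h : u = c
  · subst h; simp [flipBarAt, flipBar]
  · simp [flipBarAt, h]

lemma flipBarAt_of_ne {u : ℕ × ℕ} (h : u ≠ c) : flipBarAt c σ u = σ u :=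
  Function.update_of_ne h _ _

@[simp]
lemma flipBarAt_snd_self : (flipBarAt c σ c).2 = !(σ c).2 := by
  simp [flipBarAt, flipBar]

@[simp]
lemma flipBarAt_flipBarAt : flipBarAt c (flipBarAt c σ) = σ := by
  funext u
  by_cases h : u = c
  · subst h; simp [flipBarAt, flipBar]
  · simp [flipBarAt, h]

lemma indOf_lt1_flipBarAt_iff {u v : ℕ × ℕ} (h : u = c → (σ v).1 ≠ (σ c).1) :
    IndOf lt1 (flipBarAt c σ u) (flipBarAt c σ v) ↔ IndOf lt1 (σ u) (σ v) := by
  by_cases e : (σ u).1 = (σ v).1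
  · have huc : u ≠ c := fun huc => h huc (huc ▸ e.symm)
    rw [indOf_lt1_iff_of_fst_eq (by simpa using e), indOf_lt1_iff_of_fst_eq e,
      flipBarAt_of_ne huc]
  · rw [indOf_lt1_iff_of_fst_ne (by simpa using e), indOf_lt1_iff_of_fst_ne e,
      flipBarAt_fst, flipBarAt_fst]

lemma desCells_flipBarAt (hbelow : (c.1 - 1, c.2) ∈ cells μ → (σ (c.1 - 1, c.2)).1 ≠ (σ c).1) :
    desCells μ (IndOf lt1) (flipBarAt c σ) = desCells μ (IndOf lt1) σ := by
  refine filter_congr fun u _ => and_congr_right fun hb => indOf_lt1_flipBarAt_iff ?_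
  rintro rfl
  exact hbelow hb

lemma card_invPairs_flipBarAt (hc : c ∈ cells μ)
    (hpartner : ∃! w, w ∈ cells μ ∧ AttackOrd c w ∧ (σ w).1 = (σ c).1) (hbar : (σ c).2 = false) :
    #(invPairs μ (IndOf lt1) (flipBarAt c σ)) = #(invPairs μ (IndOf lt1) σ) + 1 := by
  obtain ⟨w₀, ⟨hw₀, hatt₀, heq₀⟩, huniq⟩ := hpartner
  have hnotin : (c, w₀) ∉ invPairs μ (IndOf lt1) σ := by
    simp [invPairs, indOf_lt1_iff_of_fst_eq heq₀.symm, hbar]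
  suffices invPairs μ (IndOf lt1) (flipBarAt c σ) = insert (c, w₀) (invPairs μ (IndOf lt1) σ) by
    rw [this, card_insert_of_notMem hnotin]
  ext p
  by_cases hp : p = (c, w₀)
  · subst hp
    simp only [invPairs, mem_filter, mem_product, mem_insert, true_or, iff_true]
    refine ⟨⟨hc, hw₀⟩, hatt₀, ?_⟩
    rw [indOf_lt1_iff_of_fst_eq (by simpa using heq₀.symm), flipBarAt_snd_self, hbar]
    rfl
  · simp only [invPairs, mem_filter, mem_insert, hp, false_or]
    refine and_congr_right fun hmem => and_congr_right fun hatt => indOf_lt1_flipBarAt_iff ?_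
    intro h1 h2
    exact hp (Prod.ext h1 (huniq p.2 ⟨(mem_product.mp hmem).2, h1 ▸ hatt, h2⟩))

lemma card_filter_snd_flipBarAt (hc : c ∈ cells μ) {b : Bool} (hb : (σ c).2 = !b) :
    #{u ∈ cells μ | (flipBarAt c σ u).2 = b} = #{u ∈ cells μ | (σ u).2 = b} + 1 := by
  have hnotin : c ∉ {u ∈ cells μ | (σ u).2 = b} := by simp [hb]
  rw [← card_insert_of_notMem hnotin]
  congr 1
  ext u
  by_cases h : u = c
  · subst h; simp [hc, hb]
  · simp [flipBarAt_of_ne h, h]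

end FlipBarAt

noncomputable def psiWeight (μ : List ℕ) (σ : ℕ × ℕ → SLetter) : MvPolynomial (Fin 2) ℤ :=
  (-1) ^ negCount μ σ * X 0 ^ (posCount μ σ + invStat μ (IndOf lt1) σ) *
    X 1 ^ majStat μ (IndOf lt1) σ

section Cancellation

variable {μ : List ℕ} {σ : ℕ × ℕ → SLetter} {c : ℕ × ℕ} (hc : c ∈ cells μ)
  (hpartner : ∃! w, w ∈ cells μ ∧ AttackOrd c w ∧ (σ w).1 = (σ c).1)
  (hbelow : (c.1 - 1, c.2) ∈ cells μ → (σ (c.1 - 1, c.2)).1 ≠ (σ c).1)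
include hc hpartner hbelow

lemma psiWeight_flipBarAt_of_snd_eq_false (hbar : (σ c).2 = false) :
    psiWeight μ (flipBarAt c σ) = -psiWeight μ σ := by
  have hneg : negCount μ (flipBarAt c σ) = negCount μ σ + 1 :=
    card_filter_snd_flipBarAt hc (by simp [hbar])
  have hpos : posCount μ σ = posCount μ (flipBarAt c σ) + 1 := by
    have := card_filter_snd_flipBarAt (σ := flipBarAt c σ) hc (b := false) (by simp [hbar])
    rwa [flipBarAt_flipBarAt] at this
  have hdes := desCells_flipBarAt hbelow
  have hinv : invStat μ (IndOf lt1) (flipBarAt c σ) = invStat μ (IndOf lt1) σ + 1 := by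
    have := sum_arm_desCells_le_card_invPairs μ (IndOf lt1)
      (fun _ _ _ => not_indOf_lt1_trans) σ
    simp only [invStat, hdes, card_invPairs_flipBarAt hc hpartner hbar]
    omega
  have hmaj : majStat μ (IndOf lt1) (flipBarAt c σ) = majStat μ (IndOf lt1) σ := by
    simp only [majStat, hdes]
  simp only [psiWeight, hneg, hmaj, hinv, hpos]
  ring

lemma psiWeight_flipBarAt : psiWeight μ (flipBarAt c σ) = -psiWeight μ σ := by
  cases hbar : (σ c).2
  · exact psiWeight_flipBarAt_of_snd_eq_false hc hpartner hbelow hbar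
  · have := psiWeight_flipBarAt_of_snd_eq_false (σ := flipBarAt c σ) hc (by simpa using hpartner)
      (by simpa using hbelow) (by simp [hbar])
    rw [flipBarAt_flipBarAt] at this
    rw [this, neg_neg]

end Cancellation

def flipBarOn {μ : List ℕ} {N : ℕ} (c : ℕ × ℕ) (f : {u // u ∈ cells μ} → Fin N × Bool) :
    {u // u ∈ cells μ} → Fin N × Bool :=
  fun u => if u.1 = c then ((f u).1, !(f u).2) else f u

section FlipBarOn

variable {μ : List ℕ} {N : ℕ} {c : ℕ × ℕ} (f : {u // u ∈ cells μ} → Fin N × Bool)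

lemma flipBarOn_flipBarOn : flipBarOn c (flipBarOn c f) = f := by
  funext u
  by_cases h : u.1 = c <;> simp [flipBarOn, h]

lemma superFill_flipBarOn (hc : c ∈ cells μ) :
    superFill μ (flipBarOn c f) = flipBarAt c (superFill μ f) := by
  funext u
  by_cases hu : u ∈ cells μ
  · by_cases h : u = c
    · subst h; simp [superFill, extendF, flipBarOn, flipBarAt, flipBar, hu]
    · simp [superFill, extendF, flipBarOn, flipBarAt_of_ne h, hu, h]
  · have h : u ≠ c := fun h => hu (h ▸ hc)
    simp [superFill, extendF, flipBarAt_of_ne h, hu]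

end FlipBarOn

/-- Toggling a bar changes no absolute value, hence not the toggled cell: this is an
involution. -/
noncomputable def psiInvolution (μ : List ℕ) {N : ℕ} (f : {u // u ∈ cells μ} → Fin N × Bool) :
    {u // u ∈ cells μ} → Fin N × Bool :=
  flipBarOn (lastAttackRepeat μ fun u => (superFill μ f u).1) f

section PsiInvolution

variable {μ : List ℕ} {N : ℕ} {f : {u // u ∈ cells μ} → Fin N × Bool}
  (hne : (attackRepeatCells μ fun u => (superFill μ f u).1).Nonempty)
include hne

lemma superFill_psiInvolution :
    superFill μ (psiInvolution μ f) =
      flipBarAt (lastAttackRepeat μ fun u => (superFill μ f u).1) (superFill μ f) :=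
  superFill_flipBarOn f (lastAttackRepeat_mem_cells hne)

lemma fst_superFill_psiInvolution (u : ℕ × ℕ) :
    (superFill μ (psiInvolution μ f) u).1 = (superFill μ f u).1 := by
  rw [superFill_psiInvolution hne, flipBarAt_fst]

lemma psiInvolution_psiInvolution : psiInvolution μ (psiInvolution μ f) = f := by
  rw [psiInvolution, funext (fst_superFill_psiInvolution hne), psiInvolution,
    flipBarOn_flipBarOn]

lemma psiInvolution_ne : psiInvolution μ f ≠ f := by
  intro h
  have := congrFun h ⟨_, lastAttackRepeat_mem_cells hne⟩
  simp [psiInvolution, flipBarOn, Prod.ext_iff] at this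

lemma psiWeight_psiInvolution :
    psiWeight μ (superFill μ (psiInvolution μ f)) = -psiWeight μ (superFill μ f) := by
  rw [superFill_psiInvolution hne]
  exact psiWeight_flipBarAt (lastAttackRepeat_mem_cells hne)
    (existsUnique_attackRepeat_partner hne) (lastAttackRepeat_below_ne hne)

end PsiInvolution

lemma sum_psiWeight_eq_zero_of_psiInvolution_mem {μ : List ℕ} {N : ℕ}
    (s : Finset ({u // u ∈ cells μ} → Fin N × Bool))
    (hne : ∀ f ∈ s, (attackRepeatCells μ fun u => (superFill μ f u).1).Nonempty)
    (hmem : ∀ f ∈ s, psiInvolution μ f ∈ s) :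
    ∑ f ∈ s, psiWeight μ (superFill μ f) = 0 := by
  refine sum_involution (fun f _ => psiInvolution μ f) (fun f hf => ?_)
    (fun f hf _ => psiInvolution_ne (hne f hf)) hmem
    (fun f hf => psiInvolution_psiInvolution (hne f hf))
  rw [psiWeight_psiInvolution (hne f hf), add_neg_cancel]

open scoped Classical in
theorem psi_cancellation_not_dominated_general (μ ρ : List ℕ)
    (hnd : ∃ m, ∑ j ∈ Finset.range m, conj μ (j + 1) < ∑ i ∈ Finset.range m, ρ.getD i 0) :
    ∑ f ∈ Finset.univ.filter (fun f : {u // u ∈ cells μ} → Fin ρ.length × Bool =>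
        ∀ k, 1 ≤ k →
          ((cells μ).filter fun u => sAbs (superFill μ f u) = k).card
            = ρ.getD (k - 1) 0),
      ((-1 : MvPolynomial (Fin 2) ℤ) ^ negCount μ (superFill μ f) *
        (X 0 : MvPolynomial (Fin 2) ℤ) ^
          (posCount μ (superFill μ f) + invStat μ (IndOf lt1) (superFill μ f)) *
        (X 1 : MvPolynomial (Fin 2) ℤ) ^ majStat μ (IndOf lt1) (superFill μ f))
      = 0 := by
  refine sum_psiWeight_eq_zero_of_psiInvolution_mem _
    (fun f hf => attackRepeatCells_nonempty μ ρ _ (mem_filter.mp hf).2 hnd) fun f hf => ?_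
  have hfst := fst_superFill_psiInvolution
    (attackRepeatCells_nonempty μ ρ _ (mem_filter.mp hf).2 hnd)
  rw [mem_filter] at hf ⊢
  refine ⟨mem_univ _, fun k hk => ?_⟩
  rw [← hf.2 k hk]
  exact congrArg card (filter_congr fun u _ => by rw [sAbs, sAbs, hfst])

open scoped Classical in
/-- With the order `<₁` on the super alphabet: if `ρ` is a
partition of `n = |μ|` with `ρ ≰ μ'` in dominance order, then
`Σ_σ (−1)^{m(σ)} q^{p(σ)+inv(σ)} t^{maj(σ)} = 0`, the sum being over all super
fillings `σ : dg(μ) → A` whose absolute values have content `ρ`. -/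
theorem psi_cancellation_not_dominated (n : ℕ) (μ ρ : List ℕ)
    (hμ : IsPartitionList μ) (hρ : IsPartitionList ρ)
    (hμn : μ.sum = n) (hρn : ρ.sum = n)
    (hnd : ∃ m, ∑ j ∈ Finset.range m, conj μ (j + 1) < ∑ i ∈ Finset.range m, ρ.getD i 0) :
    ∑ f ∈ Finset.univ.filter (fun f : {u // u ∈ cells μ} → Fin ρ.length × Bool =>
        ∀ k, 1 ≤ k →
          ((cells μ).filter fun u => sAbs (superFill μ f u) = k).card
            = ρ.getD (k - 1) 0),
      ((-1 : MvPolynomial (Fin 2) ℤ) ^ negCount μ (superFill μ f) *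
        (X 0 : MvPolynomial (Fin 2) ℤ) ^
          (posCount μ (superFill μ f) + invStat μ (IndOf lt1) (superFill μ f)) *
        (X 1 : MvPolynomial (Fin 2) ℤ) ^ majStat μ (IndOf lt1) (superFill μ f))
      = 0 :=
  psi_cancellation_not_dominated_general μ ρ hnd

end HHL
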